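/- Let ψ be an endomorphism of an abelian group E satisfying ψ∘ψ = multiplication by -3, and let P ∈ E be a torsion point. Then P is periodic under iteration of ψ (i.e. ψ⁽ⁿ⁾(P) = P for some n ≥ 1) if and only if gcd(ord(P), 3) = 1. -/
import Mathlib

private lemma iter_two_mul {E : Type*} [AddCommGroup E] (ψ : E →+ E)
    (hψ : ∀ P : E, ψ (ψ P) = -((3 : ℤ) • P)) (m : ℕ) (P : E) :
    (⇑ψ)^[2 * m] P = ((-3 : ℤ) ^ m) • P := by
  induction m generalizing P with
  | zero => simp
  | succ m ih =>
    have h2 : 2 * (m + 1) = 2 + 2 * m := by ring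
    rw [h2, Function.iterate_add_apply, ih]
    simp only [Function.iterate_succ, Function.iterate_zero, Function.comp_apply, id_eq]
    rw [hψ, ← neg_zsmul, smul_smul]
    congr 1
    ring

/-- if `ψ` is an endomorphism of an abelian group `E` with `ψ∘ψ = [-3]` and
`P` is a torsion point, then `P` is periodic under `ψ` iff `gcd(ord(P), 3) = 1`. -/
theorem periodic_iff_gcd_three {E : Type*} [AddCommGroup E] (ψ : E →+ E)
    (hψ : ∀ P : E, ψ (ψ P) = -((3 : ℤ) • P)) (P : E) (hP : IsOfFinAddOrder P) :
    (∃ n > 0, (⇑ψ)^[n] P = P) ↔ Nat.gcd (addOrderOf P) 3 = 1 := by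
  set d := addOrderOf P with hd
  have hdpos : 0 < d := hP.addOrderOf_pos
  have key : ∀ m : ℤ, m • P = 0 ↔ (d : ℤ) ∣ m := by
    intro m
    rw [← addOrderOf_dvd_iff_zsmul_eq_zero]
  constructor
  · rintro ⟨n, hn, hfix⟩
    have h2n : (⇑ψ)^[2 * n] P = P := by
      rw [two_mul, Function.iterate_add_apply, hfix, hfix]
    rw [iter_two_mul ψ hψ] at h2n
    have hdvd : (d : ℤ) ∣ (-3) ^ n - 1 := by
      rw [← key, sub_zsmul, one_zsmul, h2n]
      simp
    by_contra hgcd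
    have h3d : 3 ∣ d := by
      refine (Nat.Prime.dvd_iff_not_coprime (by norm_num)).mpr fun h => hgcd ?_
      exact Nat.coprime_comm.mp h
    have h3 : (3 : ℤ) ∣ (-3) ^ n - 1 :=
      dvd_trans (by exact_mod_cast h3d) hdvd
    have h3p : (3 : ℤ) ∣ (-3) ^ n := dvd_pow (by norm_num) hn.ne'
    have : (3 : ℤ) ∣ 1 := (dvd_sub_right h3p).mp h3 |>.neg_right.neg_right
    norm_num at this
  · intro hgcd
    haveI : NeZero d := ⟨hdpos.ne'⟩
    have hcop : Nat.Coprime 3 d := Nat.coprime_comm.mp hgcd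
    set u : (ZMod d)ˣ := -(ZMod.unitOfCoprime 3 hcop) with hu
    have hk : u ^ orderOf u = 1 := pow_orderOf_eq_one u
    have hkpos : 0 < orderOf u := orderOf_pos u
    refine ⟨2 * orderOf u, by positivity, ?_⟩
    rw [iter_two_mul ψ hψ]
    have hval : ((-3 : ZMod d)) = (u : ZMod d) := by
      rw [hu]; push_cast [ZMod.coe_unitOfCoprime]; ring
    have hcast : (((-3 : ℤ) ^ orderOf u - 1 : ℤ) : ZMod d) = 0 := by
      push_cast
      rw [hval, ← Units.val_pow_eq_pow_val, hk]
      simp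
    have hdvd : (d : ℤ) ∣ (-3) ^ orderOf u - 1 :=
      (ZMod.intCast_zmod_eq_zero_iff_dvd _ d).mp hcast
    have h0 := (key _).mpr hdvd
    rw [sub_zsmul, one_zsmul] at h0
    exact add_neg_eq_zero.mp h0
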